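/- arXiv:2502.14805 — 7 statements merged into one kernel-verified Lean document; each statement's English description precedes it below -/
import Mathlib

section
/- Let $G$ be a group that is nilpotent of class at most 2, and suppose every element of the derived subgroup $G'$ has odd order (equivalently, every element of $G'$ has a unique square root). Define $h_1 + h_2 = h_1 h_2 [h_2,h_1]^{1/2}$, where $[h_2,h_1] = h_2^{-1}h_1^{-1}h_2h_1$ and $z^{1/2}$ denotes the unique square root of $z$ in $G'$. Then $(G,+)$ is an abelian group. -/
/-!
In class two every commutator is central, so `⁅·,·⁆` is bilinear, and squaring is injective on
`G'` because its elements have odd order; hence the square root `r` is multiplicative on `G'`.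
Then `ab = ba⁅a,b⁆` and `r ⁅b,a⁆ = (r ⁅a,b⁆)⁻¹` give commutativity, while both sides of the
associativity law equal `abc · r ⁅b,a⁆ r ⁅c,a⁆ r ⁅c,b⁆`.
-/

open scoped commutatorElement

/-- The addition `h₁ + h₂ = h₁h₂[h₂,h₁]^{1/2}`, where `r` is a square-root function
on the derived subgroup. -/
def braceAdd {G : Type*} [Group G] (r : G → G) (a b : G) : G := a * b * r ⁅b, a⁆

open Subgroup

section

variable {G : Type*} [Group G]

theorem commutatorElement_mem_commutator (a b : G) :
    ⁅a, b⁆ ∈ commutator G :=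
  commutator_mem_commutator (mem_top a) (mem_top b)

theorem commutator_le_center_of_commutatorElement_commutatorElement_eq_one
    (hclass : ∀ a b c : G, ⁅⁅a, b⁆, c⁆ = 1) : commutator G ≤ center G := by
  rw [_root_.commutator, commutator_le]
  intro a _ b _
  exact mem_center_iff.mpr fun c => (commutatorElement_eq_one_iff_mul_comm.mp (hclass a b c)).symm

theorem eq_of_mul_self_eq_mul_self {x y : G} (hxy : Commute x y) (hodd : Odd (orderOf (x * y⁻¹)))
    (h : x * x = y * y) : x = y := by
  set z := x * y⁻¹
  have hz : z * z = 1 := by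
    rw [hxy.inv_right.symm.mul_mul_mul_comm, h, ← mul_inv_rev, mul_inv_cancel]
  obtain ⟨k, hk⟩ := hodd
  have : z = 1 := by
    calc z = (z * z) ^ k * z := by rw [hz, one_pow, one_mul]
      _ = 1 := by rw [← sq, ← pow_mul, ← pow_succ, ← hk, pow_orderOf_eq_one]
  exact mul_inv_eq_one.mp this

theorem map_mul_of_mul_self_eq {H : Subgroup G} (hH : ∀ x ∈ H, ∀ y ∈ H, Commute x y)
    (hodd : ∀ g ∈ H, Odd (orderOf g)) {r : G → G} (hr : ∀ g ∈ H, r g ∈ H ∧ r g * r g = g)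
    {g h : G} (hg : g ∈ H) (hh : h ∈ H) : r (g * h) = r g * r h := by
  obtain ⟨hgH, hg2⟩ := hr g hg
  obtain ⟨hhH, hh2⟩ := hr h hh
  obtain ⟨hghH, hgh2⟩ := hr (g * h) (mul_mem hg hh)
  have hprod := mul_mem hgH hhH
  refine eq_of_mul_self_eq_mul_self (hH _ hghH _ hprod)
    (hodd _ (mul_mem hghH (inv_mem hprod))) ?_
  rw [hgh2, (hH _ hhH _ hgH).mul_mul_mul_comm, hg2, hh2]

theorem commutatorElement_mul_mem_center_right {z : G} (hz : z ∈ center G)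
    (a b : G) : ⁅a, b * z⁆ = ⁅a, b⁆ := by
  rw [commutatorElement_mul_right_eq_mul_conj,
    commutatorElement_eq_one_iff_mul_comm.mpr (mem_center_iff.mp hz a), mul_one,
    mul_inv_cancel_right]

theorem commutatorElement_mul_mem_center_left {z : G} (hz : z ∈ center G)
    (a b : G) : ⁅a * z, b⁆ = ⁅a, b⁆ := by
  rw [commutatorElement_mul_left_eq_conj_mul,
    commutatorElement_eq_one_iff_mul_comm.mpr (mem_center_iff.mp hz b).symm, mul_one,
    mul_inv_cancel, one_mul]

theorem commutatorElement_mem_center (hcent : commutator G ≤ center G) (a b : G) :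
    ⁅a, b⁆ ∈ center G :=
  hcent (commutatorElement_mem_commutator a b)

theorem commutatorElement_mul_right_of_le_center (hcent : commutator G ≤ center G) (a b c : G) :
    ⁅a, b * c⁆ = ⁅a, b⁆ * ⁅a, c⁆ := by
  rw [commutatorElement_mul_right_eq_mul_conj, mul_assoc ⁅a, b⁆,
    mem_center_iff.mp (commutatorElement_mem_center hcent a c) b, ← mul_assoc,
    mul_inv_cancel_right]

theorem commutatorElement_mul_left_of_le_center (hcent : commutator G ≤ center G) (a b c : G) :
    ⁅a * b, c⁆ = ⁅b, c⁆ * ⁅a, c⁆ := by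
  rw [commutatorElement_mul_left_eq_conj_mul,
    mem_center_iff.mp (commutatorElement_mem_center hcent b c) a, mul_inv_cancel_right]

theorem map_one_of_map_mul {r : G → G}
    (hrmul : ∀ g ∈ commutator G, ∀ h ∈ commutator G, r (g * h) = r g * r h) :
    r 1 = 1 := by
  simpa using hrmul 1 (one_mem _) 1 (one_mem _)

theorem map_inv_of_map_mul {r : G → G}
    (hrmul : ∀ g ∈ commutator G, ∀ h ∈ commutator G, r (g * h) = r g * r h)
    {g : G} (hg : g ∈ commutator G) : r g⁻¹ = (r g)⁻¹ :=
  eq_inv_of_mul_eq_one_left <| by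
    rw [← hrmul _ (inv_mem hg) _ hg, inv_mul_cancel, map_one_of_map_mul hrmul]

theorem braceAdd_one {r : G → G}
    (hrmul : ∀ g ∈ commutator G, ∀ h ∈ commutator G, r (g * h) = r g * r h)
    (a : G) : braceAdd r a 1 = a := by
  rw [braceAdd, commutatorElement_one_left, map_one_of_map_mul hrmul, mul_one, mul_one]

theorem braceAdd_inv_right {r : G → G}
    (hrmul : ∀ g ∈ commutator G, ∀ h ∈ commutator G, r (g * h) = r g * r h) (a : G) :
    braceAdd r a a⁻¹ = 1 := by
  rw [braceAdd, commutatorElement_eq_one_iff_commute.mpr (Commute.refl a).inv_left,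
    map_one_of_map_mul hrmul, mul_one, mul_inv_cancel]

theorem braceAdd_comm {r : G → G} (hcent : commutator G ≤ center G)
    (hrmul : ∀ g ∈ commutator G, ∀ h ∈ commutator G, r (g * h) = r g * r h)
    (hsq : ∀ g ∈ commutator G, r g * r g = g) (a b : G) : braceAdd r a b = braceAdd r b a := by
  have hab := commutatorElement_mem_commutator a b
  rw [braceAdd, braceAdd, ← commutatorElement_inv, map_inv_of_map_mul hrmul hab,
    mul_inv_eq_iff_eq_mul, mul_assoc (b * a), hsq _ hab,
    mem_center_iff.mp (hcent hab) (b * a), commutatorElement_def]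
  group

theorem braceAdd_assoc {r : G → G} (hcent : commutator G ≤ center G)
    (hrc : ∀ g ∈ commutator G, r g ∈ center G)
    (hrmul : ∀ g ∈ commutator G, ∀ h ∈ commutator G, r (g * h) = r g * r h) (a b c : G) :
    braceAdd r (braceAdd r a b) c = braceAdd r a (braceAdd r b c) := by
  have hmem := commutatorElement_mem_commutator (G := G)
  have hp := hrc _ (hmem b a)
  have hs := hrc _ (hmem c b)
  simp only [braceAdd]
  rw [commutatorElement_mul_mem_center_right hp, commutatorElement_mul_right_of_le_center hcent,
    hrmul _ (hmem c a) _ (hmem c b), commutatorElement_mul_mem_center_left hs,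
    commutatorElement_mul_left_of_le_center hcent, hrmul _ (hmem c a) _ (hmem b a)]
  simp only [mul_assoc]
  rw [← mem_center_iff.mp hp (c * _), mul_assoc c, mem_center_iff.mp hs, mul_assoc]

end

/-- If `G` is nilpotent of class at most 2 and every element of `G' = [G,G]` has odd order
(so that `r` picks the unique square root in `G'`), then `(G, +)` with
`h₁ + h₂ = h₁h₂[h₂,h₁]^{1/2}` is an abelian group (with neutral element `1`). -/
theorem stmt0 {G : Type*} [Group G]
    (hclass : ∀ a b c : G, ⁅⁅a, b⁆, c⁆ = 1)
    (hodd : ∀ g ∈ commutator G, Odd (orderOf g))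
    (r : G → G)
    (hr : ∀ g ∈ commutator G, r g ∈ commutator G ∧ r g * r g = g) :
    (∀ a b : G, braceAdd r a b = braceAdd r b a) ∧
    (∀ a b c : G, braceAdd r (braceAdd r a b) c = braceAdd r a (braceAdd r b c)) ∧
    (∀ a : G, braceAdd r a 1 = a) ∧
    (∀ a : G, ∃ b : G, braceAdd r a b = 1) := by
  have hcent := commutator_le_center_of_commutatorElement_commutatorElement_eq_one hclass
  have hrmul : ∀ g ∈ commutator G, ∀ h ∈ commutator G, r (g * h) = r g * r h :=
    fun _ hg _ hh => map_mul_of_mul_self_eq (fun x _ _ hy => mem_center_iff.mp (hcent hy) x)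
      hodd hr hg hh
  exact ⟨braceAdd_comm hcent hrmul (fun g hg => (hr g hg).2),
    braceAdd_assoc hcent (fun g hg => hcent (hr g hg).1) hrmul,
    braceAdd_one hrmul, fun a => ⟨a⁻¹, braceAdd_inv_right hrmul a⟩⟩
end

section
/- Let $B$ be a left brace, and let $P$ and $Q$ be subgroups of $(B,+)$ that are also sub-left-braces closed under $\circ$, with $P \cap Q = \{0\}$. If $x \in P$, $y \in Q$ and there exist $z \in Q$, $t \in P$ with $x \circ y = z \circ t$, and the lambda map satisfies $\lambda_x(Q) \subseteq Q$, then $z = \lambda_x(y)$ and $t = \lambda_{\lambda_x(y)}^{-1}(x)$. -/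
/-- Let `B` be a left brace and `P`, `Q` additive subgroups of `B` which are sub-left-braces
(closed under `·` and `⁻¹`) invariant under all the lambda maps `λ_a : b ↦ -a + a·b`,
with `P ∩ Q = {0}`.  If `x ∈ P`, `y ∈ Q` and `x·y = z·t` with `z ∈ Q`, `t ∈ P`, then
`z = λ_x(y)` and `t = λ_{λ_x(y)}⁻¹(x) = λ_x(y)⁻¹ · (λ_x(y) + x)`. -/
theorem stmt5 {B : Type*} [AddCommGroup B] [Group B]
    (hbrace : ∀ a b c : B, a * (b + c) + a = a * b + a * c)
    (P Q : AddSubgroup B)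
    (hPmul : ∀ a ∈ P, ∀ b ∈ P, a * b ∈ P) (hPinv : ∀ a ∈ P, a⁻¹ ∈ P)
    (hQmul : ∀ a ∈ Q, ∀ b ∈ Q, a * b ∈ Q) (hQinv : ∀ a ∈ Q, a⁻¹ ∈ Q)
    (hlamP : ∀ a : B, ∀ p ∈ P, -a + a * p ∈ P)
    (hlamQ : ∀ a : B, ∀ q ∈ Q, -a + a * q ∈ Q)
    (hPQ : ∀ a : B, a ∈ P → a ∈ Q → a = 0)
    (x y z t : B) (hx : x ∈ P) (hy : y ∈ Q) (hz : z ∈ Q) (ht : t ∈ P)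
    (hfac : x * y = z * t) :
    z = -x + x * y ∧ t = (-x + x * y)⁻¹ * ((-x + x * y) + x) := by
  have hwQ : -x + x * y ∈ Q := hlamQ x y hy
  have hlP : -z + z * t ∈ P := hlamP z t ht
  have hadd : x + (-x + x * y) = z + (-z + z * t) := by
    rw [add_neg_cancel_left, add_neg_cancel_left, hfac]
  have key : z - (-x + x * y) = x - (-z + z * t) := by
    rw [sub_eq_sub_iff_add_eq_add]
    exact hadd.symm
  have hmemQ : z - (-x + x * y) ∈ Q := sub_mem hz hwQ
  have hmemP' : z - (-x + x * y) ∈ P := key ▸ sub_mem hx hlP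
  have hzero : z - (-x + x * y) = 0 := hPQ _ hmemP' hmemQ
  have hzw : z = -x + x * y := sub_eq_zero.mp hzero
  refine ⟨hzw, ?_⟩
  have hx2 : x = -z + z * t := by
    have := key
    rw [hzero] at this
    exact sub_eq_zero.mp this.symm
  have hzt : z * t = z + x := by rw [hx2]; rw [add_neg_cancel_left]
  calc t = z⁻¹ * (z * t) := by rw [← mul_assoc, inv_mul_cancel, one_mul]
    _ = (-x + x * y)⁻¹ * ((-x + x * y) + x) := by rw [hzt, hzw]
end

section
/- Let $N$ and $H$ be left braces and let $\alpha: (H,\circ) \to \mathrm{Aut}(N)$ be an action of the multiplicative group of $H$ by automorphisms of $N$ that preserve both operations of $N$ (brace automorphisms). Then the semidirect product $G = N \rtimes_\alpha H$ with multiplication $(a,h)(b,k) = (a \circ \alpha_h(b), h\circ k)$ and addition $(a,h)+(b,k) = (a+b, h+k)$ is a left brace. -/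
/-- Multiplication of the semidirect product of braces `N ⋊_α H`. -/
def sdMul {N H : Type*} [Group N] [Group H] (α : H → N → N) (p q : N × H) : N × H :=
  (p.1 * α p.2 q.1, p.2 * q.2)

/-- Addition of the semidirect product of braces: componentwise. -/
def sdAdd {N H : Type*} [AddCommGroup N] [AddCommGroup H] (p q : N × H) : N × H :=
  (p.1 + q.1, p.2 + q.2)

theorem map_one_of_map_mul_s7 {M G : Type*} [MulOneClass M] [Group G] {f : M → G}
    (hf : ∀ a b, f (a * b) = f a * f b) : f 1 = 1 :=
  (MonoidHom.mk' f hf).map_one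

section SemidirectProduct

variable {N H : Type*} [Group N] [Group H] {α : H → N → N}

def sdInv (α : H → N → N) (p : N × H) : N × H :=
  (α p.2⁻¹ p.1⁻¹, p.2⁻¹)

theorem sdMul_assoc (hmul : ∀ (h : H) (a b : N), α h (a * b) = α h a * α h b)
    (hcomp : ∀ (h k : H) (a : N), α (h * k) a = α h (α k a)) (p q s : N × H) :
    sdMul α (sdMul α p q) s = sdMul α p (sdMul α q s) := by
  simp only [sdMul, hmul, hcomp, mul_assoc]

theorem one_sdMul (hone : ∀ a : N, α 1 a = a) (p : N × H) : sdMul α (1, 1) p = p := by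
  simp [sdMul, hone]

theorem sdMul_one (hmul : ∀ (h : H) (a b : N), α h (a * b) = α h a * α h b) (p : N × H) :
    sdMul α p (1, 1) = p := by
  simp [sdMul, map_one_of_map_mul_s7 (hmul p.2)]

theorem sdMul_sdInv (hcomp : ∀ (h k : H) (a : N), α (h * k) a = α h (α k a))
    (hone : ∀ a : N, α 1 a = a) (p : N × H) : sdMul α p (sdInv α p) = (1, 1) := by
  simp [sdMul, sdInv, ← hcomp, hone]

theorem sdInv_sdMul (hmul : ∀ (h : H) (a b : N), α h (a * b) = α h a * α h b) (p : N × H) :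
    sdMul α (sdInv α p) p = (1, 1) := by
  simp [sdMul, sdInv, ← hmul, map_one_of_map_mul_s7 (hmul p.2⁻¹)]

theorem sdAdd_sdMul_sdAdd [AddCommGroup N] [AddCommGroup H]
    (hN : ∀ a b c : N, a * (b + c) + a = a * b + a * c)
    (hH : ∀ a b c : H, a * (b + c) + a = a * b + a * c)
    (hadd : ∀ (h : H) (a b : N), α h (a + b) = α h a + α h b) (a b c : N × H) :
    sdAdd (sdMul α a (sdAdd b c)) a = sdAdd (sdMul α a b) (sdMul α a c) := by
  simp only [sdMul, sdAdd, hadd, hN, hH]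

end SemidirectProduct

theorem stmt7_general {N H : Type*} [AddCommGroup N] [Group N] [AddCommGroup H] [Group H]
    (hN : ∀ a b c : N, a * (b + c) + a = a * b + a * c)
    (hH : ∀ a b c : H, a * (b + c) + a = a * b + a * c)
    (α : H → N → N)
    (hmul : ∀ (h : H) (a b : N), α h (a * b) = α h a * α h b)
    (hadd : ∀ (h : H) (a b : N), α h (a + b) = α h a + α h b)
    (hcomp : ∀ (h k : H) (a : N), α (h * k) a = α h (α k a))
    (hone : ∀ a : N, α 1 a = a) :
    (∀ p q s : N × H, sdMul α (sdMul α p q) s = sdMul α p (sdMul α q s)) ∧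
    (∀ p : N × H, sdMul α ((1 : N), (1 : H)) p = p ∧ sdMul α p ((1 : N), (1 : H)) = p) ∧
    (∀ p : N × H, ∃ q : N × H, sdMul α p q = ((1 : N), (1 : H)) ∧
      sdMul α q p = ((1 : N), (1 : H))) ∧
    (∀ a b c : N × H, sdAdd (sdMul α a (sdAdd b c)) a = sdAdd (sdMul α a b) (sdMul α a c)) :=
  ⟨sdMul_assoc hmul hcomp, fun p => ⟨one_sdMul hone p, sdMul_one hmul p⟩,
    fun p => ⟨sdInv α p, sdMul_sdInv hcomp hone p, sdInv_sdMul hmul p⟩,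
    sdAdd_sdMul_sdAdd hN hH hadd⟩

/-- Let `N` and `H` be left braces and let `α` be an action of the multiplicative group of
`H` on `N` by brace automorphisms (bijections preserving both `·` and `+`).  Then the
semidirect product `N ⋊_α H`, with multiplication `(a,h)(b,k) = (a · α_h(b), h·k)` and
componentwise addition, is a left brace: the multiplication is a group operation with
identity `(1,1)`, the addition is an abelian group operation (componentwise), and the
left-brace identity `a(b+c) + a = ab + ac` holds. -/
theorem stmt7 {N H : Type*} [AddCommGroup N] [Group N] [AddCommGroup H] [Group H]
    (hN : ∀ a b c : N, a * (b + c) + a = a * b + a * c)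
    (hH : ∀ a b c : H, a * (b + c) + a = a * b + a * c)
    (α : H → N → N)
    (hbij : ∀ h : H, Function.Bijective (α h))
    (hmul : ∀ (h : H) (a b : N), α h (a * b) = α h a * α h b)
    (hadd : ∀ (h : H) (a b : N), α h (a + b) = α h a + α h b)
    (hcomp : ∀ (h k : H) (a : N), α (h * k) a = α h (α k a))
    (hone : ∀ a : N, α 1 a = a) :
    (∀ p q s : N × H, sdMul α (sdMul α p q) s = sdMul α p (sdMul α q s)) ∧
    (∀ p : N × H, sdMul α ((1 : N), (1 : H)) p = p ∧ sdMul α p ((1 : N), (1 : H)) = p) ∧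
    (∀ p : N × H, ∃ q : N × H, sdMul α p q = ((1 : N), (1 : H)) ∧
      sdMul α q p = ((1 : N), (1 : H))) ∧
    (∀ a b c : N × H, sdAdd (sdMul α a (sdAdd b c)) a = sdAdd (sdMul α a b) (sdMul α a c)) :=
  stmt7_general hN hH α hmul hadd hcomp hone
end

section
/- Let $G$ be a finite group that is an inner semidirect product $G = NH$, $N \cap H = \{1\}$, where $N$ is a normal nilpotent subgroup of nilpotency class at most 2 whose derived subgroup $N'$ has odd order, and $H$ is a subgroup whose underlying group admits a left brace structure. Then $G$ admits a left brace structure (i.e., there exists an abelian group operation $+$ on $G$ such that $(G,+,\cdot)$ is a left brace). -/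
/-!
Commutators in `N` are central, and since `N'` has odd order every commutator `c` has the
square root `c ^ k`, `k = (|N'| + 1) / 2`. With this, the Baer sum `x + y = x y ⁅y, x⁆ ^ k`
is a left brace on `N`: bilinearity of the commutator reduces each brace axiom to an identity
between central elements. The sum is given by a group word, so every automorphism of `N`,
in particular conjugation by `H`, preserves it. Hence the componentwise sum on `N ⋊ H ≅ G`
of the braces on `N` and on `H` is a left brace.
-/

open scoped commutatorElement

structure IsLeftBrace {B : Type*} [Group B] (add : B → B → B) : Prop where
  add_comm : ∀ a b, add a b = add b a
  add_assoc : ∀ a b c, add (add a b) c = add a (add b c)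
  add_one : ∀ a, add a 1 = a
  exists_add_eq_one : ∀ a, ∃ b, add a b = 1
  mul_add_add : ∀ a b c, add (a * add b c) a = add (a * b) (a * c)

namespace IsLeftBrace

variable {B C : Type*} [Group B] [Group C] {add : B → B → B}

theorem map (h : IsLeftBrace add) (e : B ≃* C) :
    IsLeftBrace fun x y => e (add (e.symm x) (e.symm y)) where
  add_comm a b := by rw [h.add_comm]
  add_assoc a b c := by simp only [MulEquiv.symm_apply_apply, h.add_assoc]
  add_one a := by rw [map_one, h.add_one, MulEquiv.apply_symm_apply]
  exists_add_eq_one a := by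
    obtain ⟨b, hb⟩ := h.exists_add_eq_one (e.symm a)
    exact ⟨e b, by rw [MulEquiv.symm_apply_apply, hb, map_one]⟩
  mul_add_add a b c := by
    simp only [map_mul, MulEquiv.symm_apply_apply, h.mul_add_add]

theorem semidirectProduct {N K : Type*} [Group N] [Group K] {φ : K →* MulAut N}
    {addN : N → N → N} {addK : K → K → K} (hN : IsLeftBrace addN) (hK : IsLeftBrace addK)
    (hφ : ∀ k a b, φ k (addN a b) = addN (φ k a) (φ k b)) :
    IsLeftBrace fun x y : N ⋊[φ] K => ⟨addN x.left y.left, addK x.right y.right⟩ where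
  add_comm a b := by rw [hN.add_comm, hK.add_comm]
  add_assoc a b c := by rw [hN.add_assoc, hK.add_assoc]
  add_one a := by
    rw [SemidirectProduct.one_left, SemidirectProduct.one_right, hN.add_one, hK.add_one]
  exists_add_eq_one a := by
    obtain ⟨n, hn⟩ := hN.exists_add_eq_one a.left
    obtain ⟨k, hk⟩ := hK.exists_add_eq_one a.right
    exact ⟨⟨n, k⟩, SemidirectProduct.ext hn hk⟩
  mul_add_add a b c := SemidirectProduct.ext
    (by simp only [SemidirectProduct.mul_left, hφ, hN.mul_add_add])
    (by simp only [SemidirectProduct.mul_right, hK.mul_add_add])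

end IsLeftBrace

section BaerAdd

variable {N : Type*} [Group N] {k : ℕ}

def baerAdd (k : ℕ) (x y : N) : N := x * y * ⁅y, x⁆ ^ k

theorem commutatorElement_mul_commutatorElement_pow {a b : N} (h : (⁅a, b⁆ ^ k) ^ 2 = ⁅a, b⁆) :
    ⁅a, b⁆ * ⁅b, a⁆ ^ k = ⁅a, b⁆ ^ k := by
  rw [← commutatorElement_inv a b, inv_pow, mul_inv_eq_iff_eq_mul, ← sq, h]

theorem map_baerAdd {M F : Type*} [Group M] [FunLike F N M] [MonoidHomClass F N M] (f : F)
    (k : ℕ) (x y : N) : f (baerAdd k x y) = baerAdd k (f x) (f y) := by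
  simp only [baerAdd, map_mul, map_pow, map_commutatorElement]

variable (hc : ∀ a b : N, ⁅a, b⁆ ∈ Subgroup.center N)
include hc

theorem commute_commutatorElement (g a b : N) : Commute g ⁅a, b⁆ :=
  Subgroup.mem_center_iff.mp (hc a b) g

theorem commutatorElement_commutatorElement_pow (g a b : N) (n : ℕ) : ⁅g, ⁅a, b⁆ ^ n⁆ = 1 :=
  ((commute_commutatorElement hc g a b).pow_right n).commutator_eq

theorem commutatorElement_pow_commutatorElement (g a b : N) (n : ℕ) : ⁅⁅a, b⁆ ^ n, g⁆ = 1 :=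
  ((commute_commutatorElement hc g a b).pow_right n).symm.commutator_eq

theorem commutatorElement_mul_right_of_center (a b c : N) : ⁅a, b * c⁆ = ⁅a, b⁆ * ⁅a, c⁆ := by
  rw [commutatorElement_mul_right_eq_mul_conj, mul_assoc _ b,
    (commute_commutatorElement hc b a c).eq, ← mul_assoc, mul_inv_cancel_right]

theorem commutatorElement_mul_left_of_center (a b c : N) : ⁅a * b, c⁆ = ⁅b, c⁆ * ⁅a, c⁆ := by
  rw [commutatorElement_mul_left_eq_conj_mul, (commute_commutatorElement hc a b c).eq,
    mul_inv_cancel_right]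

theorem commutatorElement_mul_pow_of_center (a b w : N) (n : ℕ) :
    (⁅a, b⁆ * w) ^ n = ⁅a, b⁆ ^ n * w ^ n :=
  (commute_commutatorElement hc w a b).symm.mul_pow n

theorem mul_comm_eq_mul_mul_commutatorElement (x y : N) : y * x = x * y * ⁅y, x⁆ := by
  rw [(commute_commutatorElement hc (x * y) y x).eq, commutatorElement_def]
  group

variable (hk : ∀ a b : N, (⁅a, b⁆ ^ k) ^ 2 = ⁅a, b⁆)
include hk

theorem baerAdd_comm (x y : N) : baerAdd k x y = baerAdd k y x := by
  rw [baerAdd, baerAdd, mul_comm_eq_mul_mul_commutatorElement hc x y, mul_assoc (x * y),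
    commutatorElement_mul_commutatorElement_pow (hk y x)]

omit hk in
theorem baerAdd_assoc (x y z : N) :
    baerAdd k (baerAdd k x y) z = baerAdd k x (baerAdd k y z) := by
  simp only [baerAdd, commutatorElement_mul_right_of_center hc,
    commutatorElement_mul_left_of_center hc, commutatorElement_commutatorElement_pow hc,
    commutatorElement_pow_commutatorElement hc, mul_one, one_mul, mul_assoc,
    commutatorElement_mul_pow_of_center hc]
  rw [((commute_commutatorElement hc z y x).pow_right k).symm.left_comm,
    ((commute_commutatorElement hc (⁅y, x⁆ ^ k) z x).pow_right k).left_comm,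
    ((commute_commutatorElement hc (⁅y, x⁆ ^ k) z y).pow_right k).eq,
    ((commute_commutatorElement hc (⁅z, y⁆ ^ k) z x).pow_right k).left_comm]

theorem baerAdd_mul_add_add (a b c : N) :
    baerAdd k (a * baerAdd k b c) a = baerAdd k (a * b) (a * c) := by
  simp only [baerAdd, commutatorElement_mul_right_of_center hc,
    commutatorElement_mul_left_of_center hc, commutatorElement_commutatorElement_pow hc,
    commutatorElement_self, mul_one, one_mul, mul_assoc, commutatorElement_mul_pow_of_center hc]
  rw [((commute_commutatorElement hc a c b).pow_right k).symm.left_comm, ← mul_assoc c a,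
    mul_comm_eq_mul_mul_commutatorElement hc a c]
  simp only [mul_assoc]
  congr 4
  rw [← commutatorElement_mul_commutatorElement_pow (hk c a), mul_assoc,
    ← ((commute_commutatorElement hc _ a c).pow_right k).eq, mul_assoc]

theorem isLeftBrace_baerAdd : IsLeftBrace (baerAdd k : N → N → N) where
  add_comm := baerAdd_comm hc hk
  add_assoc := baerAdd_assoc hc
  add_one a := by rw [baerAdd, commutatorElement_one_left, one_pow, mul_one, mul_one]
  exists_add_eq_one a := ⟨a⁻¹, by simp [baerAdd, (Commute.refl a).inv_left.commutator_eq]⟩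
  mul_add_add := baerAdd_mul_add_add hc hk

end BaerAdd

theorem sq_pow_card_add_one_div_two {G : Type*} [Group G] {K : Subgroup G}
    (hK : Odd (Nat.card K)) {x : G} (hx : x ∈ K) : (x ^ ((Nat.card K + 1) / 2)) ^ 2 = x := by
  obtain ⟨m, hm⟩ := hK
  have hx1 : x ^ Nat.card K = 1 := by
    rw [← K.coe_mk x hx, ← Subgroup.coe_pow, pow_card_eq_one', Subgroup.coe_one]
  rw [← pow_mul, hm, show (2 * m + 1 + 1) / 2 * 2 = 2 * m + 1 + 1 by omega, pow_succ, ← hm, hx1,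
    one_mul]

theorem stmt8_general {G : Type*} [Group G] (N H : Subgroup G)
    (hNnormal : N.Normal)
    (hNclass : ∀ a ∈ N, ∀ b ∈ N, ∀ c ∈ N, ⁅⁅a, b⁆, c⁆ = 1)
    (hNodd : Odd (Nat.card (commutator ↥N)))
    (hHbrace : ∃ add : ↥H → ↥H → ↥H,
      (∀ a b, add a b = add b a) ∧
      (∀ a b c, add (add a b) c = add a (add b c)) ∧
      (∀ a, add a 1 = a) ∧
      (∀ a, ∃ b, add a b = 1) ∧
      (∀ a b c, add (a * add b c) a = add (a * b) (a * c)))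
    (hprod : ∀ g : G, ∃ n ∈ N, ∃ h ∈ H, g = n * h)
    (hint : ∀ g : G, g ∈ N → g ∈ H → g = 1) :
    ∃ add : G → G → G,
      (∀ a b, add a b = add b a) ∧
      (∀ a b c, add (add a b) c = add a (add b c)) ∧
      (∀ a, add a 1 = a) ∧
      (∀ a, ∃ b, add a b = 1) ∧
      (∀ a b c, add (a * add b c) a = add (a * b) (a * c)) := by
  obtain ⟨addH, hcomm, hassoc, hone, hinv, hmul⟩ := hHbrace
  have hcompl : N.IsComplement' H := by
    refine ⟨Subgroup.mul_injective_of_disjoint (Subgroup.disjoint_def.mpr (hint _ · ·)),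
      fun g => ?_⟩
    obtain ⟨n, hn, h, hh, rfl⟩ := hprod g
    exact ⟨(⟨n, hn⟩, ⟨h, hh⟩), rfl⟩
  have hcenter (a b : N) : ⁅a, b⁆ ∈ Subgroup.center N :=
    Subgroup.mem_center_iff.mpr fun g => Subtype.ext
      (commutatorElement_eq_one_iff_commute.mp (hNclass a a.2 b b.2 g g.2)).symm.eq
  have hsqrt (a b : N) : (⁅a, b⁆ ^ ((Nat.card (commutator N) + 1) / 2)) ^ 2 = ⁅a, b⁆ :=
    sq_pow_card_add_one_div_two hNodd
      (Subgroup.commutator_mem_commutator (Subgroup.mem_top a) (Subgroup.mem_top b))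
  have hbrace := ((isLeftBrace_baerAdd hcenter hsqrt).semidirectProduct
    ⟨hcomm, hassoc, hone, hinv, hmul⟩ fun h => map_baerAdd _ _).map
    (SemidirectProduct.mulEquivSubgroup hcompl)
  exact ⟨_, hbrace.add_comm, hbrace.add_assoc, hbrace.add_one, hbrace.exists_add_eq_one,
    hbrace.mul_add_add⟩

/-- Let `G` be a finite group which is an inner semidirect product `G = NH`,
`N ∩ H = {1}`, of a normal nilpotent subgroup `N` of nilpotency class at most `2` whose
derived subgroup has odd order, by a subgroup `H` admitting a left brace structure.
Then `G` admits a left brace structure: there is an abelian group operation `+` on `G`,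
with neutral element `1`, such that `a(b+c) + a = ab + ac` for all `a, b, c ∈ G`. -/
theorem stmt8 {G : Type*} [Group G] [Finite G] (N H : Subgroup G)
    (hNnormal : N.Normal)
    (hNclass : ∀ a ∈ N, ∀ b ∈ N, ∀ c ∈ N, ⁅⁅a, b⁆, c⁆ = 1)
    (hNodd : Odd (Nat.card (commutator ↥N)))
    (hHbrace : ∃ add : ↥H → ↥H → ↥H,
      (∀ a b, add a b = add b a) ∧
      (∀ a b c, add (add a b) c = add a (add b c)) ∧
      (∀ a, add a 1 = a) ∧
      (∀ a, ∃ b, add a b = 1) ∧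
      (∀ a b c, add (a * add b c) a = add (a * b) (a * c)))
    (hprod : ∀ g : G, ∃ n ∈ N, ∃ h ∈ H, g = n * h)
    (hint : ∀ g : G, g ∈ N → g ∈ H → g = 1) :
    ∃ add : G → G → G,
      (∀ a b, add a b = add b a) ∧
      (∀ a b c, add (add a b) c = add a (add b c)) ∧
      (∀ a, add a 1 = a) ∧
      (∀ a, ∃ b, add a b = 1) ∧
      (∀ a b c, add (a * add b c) a = add (a * b) (a * c)) :=
  stmt8_general N H hNnormal hNclass hNodd hHbrace hprod hint
end

section
/- Let $P$ and $H$ be groups with $P$ nilpotent, let $(H,+,\cdot)$ be a skew left brace of nilpotent type, and let $H$ act on $P$ by group automorphisms via its multiplicative group. On $G = P \rtimes H$ define $(a,c) + (b,d) := (ab, c+d)$. Then $(G,+,\cdot)$ is a skew left brace of nilpotent type, where the multiplication is the semidirect product multiplication. -/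
/-- Multiplication of the semidirect product `P ⋊ H`. -/
def sdpMul {P H : Type*} [Group P] [Group H] (α : H → P → P) (x y : P × H) : P × H :=
  (x.1 * α x.2 y.1, x.2 * y.2)

/-- Addition on `P ⋊ H`: `(a,c) + (b,d) = (ab, c + d)`, where the additive group of `H`
is encoded by a bijection `e : H ≃ A` onto a group `A`. -/
def sdpAdd {P H A : Type*} [Group P] [Group A] (e : H ≃ A) (x y : P × H) : P × H :=
  (x.1 * y.1, e.symm (e x.2 * e y.2))

/-- The additive inverse on `P ⋊ H`: `-(a,c) = (a⁻¹, -c)`. -/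
def sdpNeg {P H A : Type*} [Group P] [Group A] (e : H ≃ A) (x : P × H) : P × H :=
  (x.1⁻¹, e.symm (e x.2)⁻¹)

/-- Let `P` be a nilpotent group, let `H` carry a skew left brace structure of nilpotent
type (encoded by a nilpotent group `A` and a bijection `e : H ≃ A` transporting the
additive operation, so `b + c = e.symm (e b * e c)` and `-b = e.symm (e b)⁻¹`), and let
the multiplicative group of `H` act on `P` by group automorphisms `α`.  On `G = P ⋊ H`
define `(a,c) + (b,d) := (ab, c + d)`.  Then `(G, +, ·)` is a skew left brace of
nilpotent type: its additive group is the direct product of the nilpotent groups `P`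
and `(H,+) ≅ A`, hence nilpotent, and the skew brace identity
`x(y + z) = xy - x + xz` holds. -/
theorem stmt12 {P H A : Type*} [Group P] [Group H] [Group A]
    (hPnil : Group.IsNilpotent P) (hAnil : Group.IsNilpotent A)
    (e : H ≃ A)
    (hHbrace : ∀ a b c : H,
      a * e.symm (e b * e c) = e.symm (e (a * b) * (e a)⁻¹ * e (a * c)))
    (α : H → P → P)
    (hbij : ∀ h : H, Function.Bijective (α h))
    (hmul : ∀ (h : H) (a b : P), α h (a * b) = α h a * α h b)
    (hcomp : ∀ (h k : H) (a : P), α (h * k) a = α h (α k a))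
    (hone : ∀ a : P, α 1 a = a) :
    Group.IsNilpotent (P × A) ∧
    (∀ x y z : P × H,
      sdpMul α x (sdpAdd e y z) =
        sdpAdd e (sdpAdd e (sdpMul α x y) (sdpNeg e x)) (sdpMul α x z)) := by
  haveI := hPnil; haveI := hAnil
  refine ⟨inferInstance, ?_⟩
  rintro ⟨a, c⟩ ⟨b, d⟩ ⟨p, q⟩
  refine Prod.ext ?_ ?_
  · simp only [sdpMul, sdpAdd, sdpNeg, hmul]
    group
  · simp only [sdpMul, sdpAdd, sdpNeg, Equiv.apply_symm_apply]
    exact hHbrace c d q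
end

section
/- Every finite group with the Sylow tower property admits a skew left brace structure of nilpotent type; that is, there exists a group operation $+$ on $G$ with $(G,+)$ nilpotent such that $a(b+c) = ab - a + ac$ for all $a,b,c \in G$. -/
/-- A finite group `G` has the Sylow tower property if there is a normal series
`1 = G₀ ≤ G₁ ≤ ⋯ ≤ Gₙ = G` (each `Gᵢ` normal in `G`) such that each quotient
`G_{i+1}/G_i` is isomorphic to a Sylow subgroup of `G`. -/
def SylowTower (G : Type*) [Group G] : Prop :=
  ∃ (n : ℕ) (s : Fin (n + 1) → Subgroup G),
    s 0 = ⊥ ∧ s (Fin.last n) = ⊤ ∧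
    (∀ i : Fin n, s i.castSucc ≤ s i.succ) ∧
    (∀ i : Fin (n + 1), (s i).Normal) ∧
    (∀ i : Fin n, ∃ (p : ℕ), p.Prime ∧ ∃ (P : Sylow p G)
      (f : ↥(s i.succ) →* ↥(P : Subgroup G)),
        Function.Surjective f ∧ f.ker = (s i.castSucc).subgroupOf (s i.succ))

universe u

def BraceGood (G : Type u) [Group G] : Prop :=
  ∃ (A : Type u) (_ : Group A) (_ : Group.IsNilpotent A) (e : G ≃ A),
    ∀ a b c : G,
      a * e.symm (e b * e c) = e.symm (e (a * b) * (e a)⁻¹ * e (a * c))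

theorem braceGood_of_nilpotent (G : Type u) [Group G] [hn : Group.IsNilpotent G] :
    BraceGood G :=
  ⟨G, ‹_›, hn, Equiv.refl G, fun a b c => by
    show a * (b * c) = a * b * a⁻¹ * (a * c)
    rw [mul_assoc (a * b), inv_mul_cancel_left, mul_assoc]⟩

theorem BraceGood.of_mulEquiv {G H : Type u} [Group G] [Group H]
    (f : G ≃* H) (h : BraceGood H) : BraceGood G := by
  obtain ⟨A, gA, nA, e, he⟩ := h
  refine ⟨A, gA, nA, f.toEquiv.trans e, fun a b c => ?_⟩
  apply f.injective
  simp only [Equiv.trans_apply, Equiv.symm_trans_apply, MulEquiv.coe_toEquiv,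
    MulEquiv.coe_toEquiv_symm, map_mul, MulEquiv.apply_symm_apply]
  simpa [map_mul] using he (f a) (f b) (f c)

theorem braceGood_aux {G : Type u} [Group G] {N H : Subgroup G} [hNn : N.Normal]
    (ee : G ≃ ↥N × ↥H) (ee_symm : ∀ (n : ↥N) (h : ↥H), ee.symm (n, h) = (n : G) * h)
    (hN : Group.IsNilpotent ↥N) (hH : BraceGood ↥H) :
    BraceGood G := by
  obtain ⟨A, gA, nA, e, he⟩ := hH
  haveI := hN
  have hnh : ∀ (n : ↥N) (h : ↥H), ee ((n : G) * h) = (n, h) := by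
    intro n h
    rw [← ee_symm n h, Equiv.apply_symm_apply]
  have hsplit : ∀ g : G, ((ee g).1 : G) * ((ee g).2 : G) = g := by
    intro g
    rw [← ee_symm (ee g).1 (ee g).2, Prod.mk.eta, Equiv.symm_apply_apply]
  have key : ∀ g g' : G, ee (g * g') =
      ((ee g).1 * ⟨((ee g).2 : G) * (ee g').1 * ((ee g).2 : G)⁻¹,
        hNn.conj_mem _ (ee g').1.2 _⟩, (ee g).2 * (ee g').2) := by
    intro g g'
    have harg : (((ee g).1 * ⟨((ee g).2 : G) * (ee g').1 * ((ee g).2 : G)⁻¹,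
        hNn.conj_mem _ (ee g').1.2 _⟩ : ↥N) : G) * (((ee g).2 * (ee g').2 : ↥H) : G)
        = g * g' := by
      push_cast
      conv_rhs => rw [← hsplit g, ← hsplit g']
      group
    rw [← harg, hnh]
  refine ⟨↥N × A, inferInstance, inferInstance,
    ee.trans (Equiv.prodCongr (Equiv.refl ↥N) e), fun a b c => ?_⟩
  simp only [Equiv.trans_apply, Equiv.symm_trans_apply, Equiv.prodCongr_apply,
    Equiv.prodCongr_symm, Equiv.refl_symm, Prod.map, Equiv.refl_apply, Prod.mk_mul_mk,
    Prod.inv_mk, key, mul_inv_rev, ee_symm]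
  rw [← he]
  push_cast
  conv_lhs => rw [← hsplit a]
  group

theorem braceGood_of_complement {G : Type u} [Group G] {N H : Subgroup G} [hNn : N.Normal]
    (hc : Subgroup.IsComplement' N H) (hN : Group.IsNilpotent ↥N) (hH : BraceGood ↥H) :
    BraceGood G :=
  braceGood_aux hc.equiv (fun _ _ => rfl) hN hH

theorem card_of_surjective {K P : Type*} [Group K] [Group P] (f : K →* P)
    (hf : Function.Surjective f) : Nat.card K = Nat.card P * Nat.card f.ker := by
  rw [Subgroup.card_eq_card_quotient_mul_card_subgroup f.ker,
    Nat.card_congr (QuotientGroup.quotientKerEquivOfSurjective f hf).toEquiv]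

theorem card_map_mk' {G : Type u} [Group G] (N K : Subgroup G) [N.Normal] (h : N ≤ K) :
    Nat.card (K.map (QuotientGroup.mk' N)) * Nat.card N = Nat.card K := by
  have hker : ((QuotientGroup.mk' N).subgroupMap K).ker = N.subgroupOf K := by
    ext x
    simp [MonoidHom.mem_ker, Subgroup.mem_subgroupOf, Subtype.ext_iff,
      QuotientGroup.eq_one_iff]
  have := card_of_surjective _ ((QuotientGroup.mk' N).subgroupMap_surjective K)
  rw [this, hker, Nat.card_congr (Subgroup.subgroupOfEquivOfLe h).toEquiv]

noncomputable def complementQuotientEquiv {G : Type u} [Group G] {N H : Subgroup G}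
    [N.Normal] (hc : Subgroup.IsComplement' N H) : ↥H ≃* G ⧸ N := by
  refine MulEquiv.ofBijective ((QuotientGroup.mk' N).comp H.subtype) ⟨?_, ?_⟩
  · rw [← MonoidHom.ker_eq_bot_iff, Subgroup.eq_bot_iff_forall]
    intro x hx
    simp only [MonoidHom.mem_ker, MonoidHom.comp_apply, Subgroup.coe_subtype,
      QuotientGroup.mk'_apply, QuotientGroup.eq_one_iff] at hx
    have : (x : G) ∈ N ⊓ H := ⟨hx, x.2⟩
    rw [hc.disjoint.eq_bot] at this
    exact Subtype.ext this
  · intro q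
    induction q using QuotientGroup.induction_on with
    | H g =>
      obtain ⟨⟨n, h⟩, rfl⟩ := hc.existsUnique g |>.exists
      exact ⟨⟨h, h.2⟩, by
        simp only [MonoidHom.comp_apply, Subgroup.coe_subtype, QuotientGroup.mk'_apply]
        rw [QuotientGroup.mk_mul, (QuotientGroup.eq_one_iff _).mpr n.2, one_mul]⟩

def Tower' (G : Type u) [Group G] (n : ℕ) : Prop :=
  ∃ s : Fin (n + 1) → Subgroup G,
    s 0 = ⊥ ∧ s (Fin.last n) = ⊤ ∧
    (∀ i : Fin n, s i.castSucc ≤ s i.succ) ∧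
    (∀ i : Fin (n + 1), (s i).Normal) ∧
    (∀ i : Fin n, ∃ p : ℕ, p.Prime ∧
      Nat.card (s i.succ) = Nat.card (s i.castSucc) * p ^ (Nat.card G).factorization p)

theorem tower'_of_sylowTower {G : Type u} [Group G] [Finite G] (h : SylowTower G) :
    ∃ n, Tower' G n := by
  obtain ⟨n, s, h0, hl, hle, hnorm, hq⟩ := h
  refine ⟨n, s, h0, hl, hle, hnorm, fun i => ?_⟩
  obtain ⟨p, hp, P, f, hf, hker⟩ := hq i
  haveI : Fact p.Prime := ⟨hp⟩
  refine ⟨p, hp, ?_⟩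
  rw [card_of_surjective f hf, hker,
    Nat.card_congr (Subgroup.subgroupOfEquivOfLe (hle i)).toEquiv,
    Sylow.card_eq_multiplicity P, mul_comm]

theorem braceGood_of_tower' :
    ∀ (n : ℕ) (G : Type u) [Group G] [Finite G], Tower' G n → BraceGood G := by
  intro n
  induction n with
  | zero =>
    intro G _ _ h
    obtain ⟨s, h0, hl, -, -, -⟩ := h
    haveI : Subsingleton G := by
      constructor
      intro a b
      have key : ∀ x : G, x = 1 := by
        intro x
        have hx := Subgroup.mem_top x
        rw [← hl, show Fin.last 0 = 0 from rfl, h0, Subgroup.mem_bot] at hx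
        exact hx
      rw [key a, key b]
    exact braceGood_of_nilpotent G
  | succ m ih =>
    intro G _ _ h
    obtain ⟨s, h0, hl, hle, hnorm, hq⟩ := h
    have h1 : (0 : Fin (m + 1)).succ = (1 : Fin (m + 2)) := by
      ext; simp
    set N := s 1 with hN
    haveI : N.Normal := hnorm 1
    obtain ⟨p, hp, hcard⟩ := hq 0
    haveI : Fact p.Prime := ⟨hp⟩
    have hc0 : (0 : Fin (m + 1)).castSucc = (0 : Fin (m + 2)) := by ext; simp
    have hNcard : Nat.card N = p ^ (Nat.card G).factorization p := by
      rw [hN, ← h1, hcard, hc0, h0, Subgroup.card_bot, one_mul]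
    have hmono : ∀ k : Fin (m + 1), N ≤ s k.succ := by
      intro k
      induction k using Fin.induction with
      | zero => rw [h1]
      | succ i ihh =>
        rw [Fin.succ_castSucc] at ihh
        exact le_trans ihh (hle i.succ)
    have hG0 : Nat.card G ≠ 0 := Nat.card_pos.ne'
    have hnd : ¬ p ∣ N.index := by
      intro hd
      have h2 : p ^ ((Nat.card G).factorization p + 1) ∣ Nat.card N * N.index := by
        rw [hNcard, pow_succ]
        exact mul_dvd_mul dvd_rfl hd
      rw [N.card_mul_index] at h2
      exact Nat.pow_succ_factorization_not_dvd hG0 hp h2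
    have hcop : (Nat.card N).Coprime N.index := by
      rw [hNcard]
      exact Nat.Coprime.pow_left _ ((Nat.Prime.coprime_iff_not_dvd hp).mpr hnd)
    obtain ⟨Hc, hc⟩ := Subgroup.exists_right_complement'_of_coprime hcop
    have hNnil : Group.IsNilpotent ↥N := (IsPGroup.of_card hNcard).isNilpotent
    set t : Fin (m + 1) → Subgroup (G ⧸ N) :=
      fun j => (s j.succ).map (QuotientGroup.mk' N) with ht
    have ht0 : t 0 = ⊥ := by
      rw [ht]
      simp only [h1]
      rw [Subgroup.map_eq_bot_iff, QuotientGroup.ker_mk']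
    have htl : t (Fin.last m) = ⊤ := by
      have hlast : (Fin.last m).succ = Fin.last (m + 1) := by ext; simp
      rw [ht]
      simp only [hlast, hl]
      exact Subgroup.map_top_of_surjective _ (QuotientGroup.mk'_surjective N)
    have htle : ∀ j : Fin m, t j.castSucc ≤ t j.succ := by
      intro j
      refine Subgroup.map_mono ?_
      rw [Fin.succ_castSucc]
      exact hle j.succ
    have htnorm : ∀ j : Fin (m + 1), (t j).Normal :=
      fun j => Subgroup.Normal.map (hnorm j.succ) _ (QuotientGroup.mk'_surjective N)
    have hNQ : Nat.card N * Nat.card (G ⧸ N) = Nat.card G := N.card_mul_index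
    have hcards : ∀ j : Fin m, ∃ q : ℕ, q.Prime ∧
        Nat.card (t j.succ) = Nat.card (t j.castSucc) *
          q ^ (Nat.card (G ⧸ N)).factorization q := by
      intro j
      obtain ⟨q, hq', hcardj⟩ := hq j.succ
      refine ⟨q, hq', ?_⟩
      have hqN : ¬ q ∣ Nat.card N := by
        intro hdvd
        rw [hNcard] at hdvd
        have hqp : q = p := (Nat.prime_dvd_prime_iff_eq hq' hp).mp (hq'.dvd_of_dvd_pow hdvd)
        subst hqp
        have hvp : 1 ≤ (Nat.card G).factorization q := by
          rcases Nat.eq_zero_or_pos ((Nat.card G).factorization q) with h' | h'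
          · rw [h', pow_zero] at hdvd
            exact absurd (Nat.le_of_dvd one_pos hdvd) (not_le.mpr hq'.one_lt)
          · exact h'
        have hNle : N ≤ s j.succ.castSucc := by
          rw [← Fin.succ_castSucc]
          exact hmono j.castSucc
        have h2 : q ^ ((Nat.card G).factorization q + 1) ∣ Nat.card G := by
          have d1 : Nat.card N ∣ Nat.card (s j.succ.castSucc) :=
            Subgroup.card_dvd_of_le hNle
          have d2 : q ^ ((Nat.card G).factorization q + 1) ∣
              Nat.card (s j.succ.castSucc) * q ^ (Nat.card G).factorization q := by
            rw [pow_succ, mul_comm]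
            exact mul_dvd_mul (dvd_trans (dvd_pow_self q (Nat.one_le_iff_ne_zero.mp hvp)) (hNcard ▸ d1)) dvd_rfl
          calc q ^ ((Nat.card G).factorization q + 1)
              ∣ Nat.card (s j.succ.castSucc) * q ^ (Nat.card G).factorization q := d2
            _ = Nat.card (s j.succ.succ) := hcardj.symm
            _ ∣ Nat.card G := Subgroup.card_subgroup_dvd_card _
        exact Nat.pow_succ_factorization_not_dvd hG0 hq' h2
      have hfq : (Nat.card (G ⧸ N)).factorization q = (Nat.card G).factorization q := by
        have hN0 : Nat.card N ≠ 0 := Nat.card_pos.ne'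
        have hQ0 : Nat.card (G ⧸ N) ≠ 0 := Nat.card_pos.ne'
        rw [← hNQ, Nat.factorization_mul hN0 hQ0]
        simp [Nat.factorization_eq_zero_of_not_dvd hqN]
      have e1 := card_map_mk' N (s j.succ.succ) (hmono j.succ)
      have e2 := card_map_mk' N (s j.succ.castSucc)
        (by rw [← Fin.succ_castSucc]; exact hmono j.castSucc)
      have hmm : Nat.card (t j.succ) * Nat.card N =
          (Nat.card (t j.castSucc) * q ^ (Nat.card G).factorization q) * Nat.card N := by
        calc Nat.card (t j.succ) * Nat.card N = Nat.card (s j.succ.succ) := e1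
          _ = Nat.card (s j.succ.castSucc) * q ^ (Nat.card G).factorization q := hcardj
          _ = (Nat.card (t j.castSucc) * Nat.card N) * q ^ (Nat.card G).factorization q := by
              rw [← e2]
              simp only [ht, Fin.succ_castSucc]
          _ = (Nat.card (t j.castSucc) * q ^ (Nat.card G).factorization q) * Nat.card N := by
              ring
      have := Nat.eq_of_mul_eq_mul_right Nat.card_pos hmm
      rw [hfq]
      exact this
    have hQgood : BraceGood (G ⧸ N) := ih (G ⧸ N) ⟨t, ht0, htl, htle, htnorm, hcards⟩
    exact braceGood_of_complement hc hNnil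
      (BraceGood.of_mulEquiv (complementQuotientEquiv hc) hQgood)

/-- Every finite group with the Sylow tower property admits a skew left brace structure
of nilpotent type: there is a group operation `+` on `G` with `(G,+)` nilpotent
(encoded by a nilpotent group `A` and a bijection `e : G ≃ A` transporting the
operation) such that `a(b+c) = ab - a + ac` for all `a, b, c ∈ G`. -/
theorem stmt13 {G : Type u} [Group G] [Finite G] (h : SylowTower G) :
    ∃ (A : Type u) (_ : Group A) (_ : Group.IsNilpotent A) (e : G ≃ A),
      ∀ a b c : G,
        a * e.symm (e b * e c) = e.symm (e (a * b) * (e a)⁻¹ * e (a * c)) := by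
  obtain ⟨n, hn⟩ := tower'_of_sylowTower h
  exact braceGood_of_tower' n G hn
end

section
/- Let $G$ be a finite group, $F(G)$ its Fitting subgroup, and suppose $P$ is a subgroup of $G$ such that $P F(G)$ is normal in $G$, the derived subgroup $P'$ is contained in the center of $F(G)$, and $P$ is a Sylow $p$-subgroup of $PF(G)$. Then $P'$ is a normal subgroup of $G$. -/
/-! By Frattini's argument `G = N_G(P) · P F(G)`. Both factors normalize `P'`: conjugation
fixing `P` fixes `P'`, while `P' ⊴ P` and `F(G)` centralizes `P'`. Hence `N_G(P') = G`. -/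

/-- The Fitting subgroup of a group: the join of all normal nilpotent subgroups.
For a finite group this is the maximal normal nilpotent subgroup. -/
def FittingSubgroup (G : Type*) [Group G] : Subgroup G :=
  ⨆ (N : Subgroup G) (_ : N.Normal) (_ : Group.IsNilpotent ↥N), N

namespace Subgroup

variable {G : Type*} [Group G]

theorem normalizer_inf_normalizer_le_normalizer_commutator (H K : Subgroup G) :
    normalizer (H : Set G) ⊓ normalizer (K : Set G) ≤
      normalizer ((⁅H, K⁆ : Subgroup G) : Set G) := by
  intro g hg
  obtain ⟨hH, hK⟩ := mem_inf.mp hg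
  rw [mem_normalizer_iff_map_conj_eq] at hH hK
  rw [mem_normalizer_iff_map_conj_eq, map_commutator, hH, hK]

theorem sup_le_normalizer_commutator_self {H K : Subgroup G}
    (hHK : ⁅H, H⁆ ≤ centralizer (K : Set G)) :
    H ⊔ K ≤ normalizer ((⁅H, H⁆ : Subgroup G) : Set G) :=
  sup_le (normalizer_commutator_ge_left H H)
    ((le_centralizer_iff.mp hHK).trans (centralizer_le_normalizer _))

end Subgroup

theorem stmt16_general {G : Type*} [Group G] [Finite G] (p : ℕ) (hp : p.Prime)
    (P : Subgroup G)
    (hPFnormal : (P ⊔ FittingSubgroup G).Normal)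
    (hP'central : (⁅P, P⁆ : Subgroup G) ≤ Subgroup.centralizer (FittingSubgroup G : Set G))
    (hPp : IsPGroup p ↥P)
    (hPsylow : ¬ p ∣ (P.subgroupOf (P ⊔ FittingSubgroup G)).index) :
    (⁅P, P⁆ : Subgroup G).Normal := by
  have := Fact.mk hp
  set N := P ⊔ FittingSubgroup G
  let S : Sylow p N := (hPp.comap_of_injective N.subtype N.subtype_injective).toSylow hPsylow
  have hS : (S : Subgroup N).map N.subtype = P := by
    change (P.subgroupOf N).map N.subtype = P
    rw [Subgroup.subgroupOf_map_subtype, inf_of_le_left le_sup_left]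
  rw [← Subgroup.normalizer_eq_top_iff, eq_top_iff, ← Sylow.normalizer_sup_eq_top S, hS]
  exact sup_le ((le_inf le_rfl le_rfl).trans
      (Subgroup.normalizer_inf_normalizer_le_normalizer_commutator P P))
    (Subgroup.sup_le_normalizer_commutator_self hP'central)

/-- Let `G` be a finite group with Fitting subgroup `F(G)` and let `P ≤ G` be such that
`P·F(G)` is normal in `G`, the derived subgroup `P'` is contained in the center of
`F(G)` (i.e. `P' ≤ F(G)` and `P'` centralizes `F(G)`), and `P` is a Sylow `p`-subgroup
of `P·F(G)` (a `p`-subgroup of index prime to `p`).  Then `P'` is normal in `G`. -/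
theorem stmt16 {G : Type*} [Group G] [Finite G] (p : ℕ) (hp : p.Prime)
    (P : Subgroup G)
    (hPFnormal : (P ⊔ FittingSubgroup G).Normal)
    (hP'F : ⁅P, P⁆ ≤ FittingSubgroup G)
    (hP'central : (⁅P, P⁆ : Subgroup G) ≤ Subgroup.centralizer (FittingSubgroup G : Set G))
    (hPp : IsPGroup p ↥P)
    (hPsylow : ¬ p ∣ (P.subgroupOf (P ⊔ FittingSubgroup G)).index) :
    (⁅P, P⁆ : Subgroup G).Normal :=
  stmt16_general p hp P hPFnormal hP'central hPp hPsylow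
end
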